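/- Let G be a simple graph on n vertices with minimum degree δ(G) satisfying 6·δ(G) ≥ 5n, and suppose the edges of G are 3-coloured so that some colour c has exactly 2 colour-c components. Then there exists a monochromatic component whose order m satisfies 2m ≥ n. -/

import Mathlib

open SimpleGraph

/-- The colour-`i` subgraph of the graph `G` under the edge-colouring `c`. -/
def colourSub {V : Type*} {k : ℕ} (G : SimpleGraph V) (c : Sym2 V → Fin k) (i : Fin k) :
    SimpleGraph V where
  Adj u v := G.Adj u v ∧ c s(u, v) = i
  symm := by
    constructor
    intro u v h
    exact ⟨h.1.symm, by rw [Sym2.eq_swap]; exact h.2⟩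
  loopless := by
    constructor
    intro u h
    exact (G.ne_of_adj h.1) rfl

/-- `K` is a monochromatic component of colour `i`: a connected component of the colour-`i`
subgraph of `G` that contains at least one edge. Its order is `K.supp.ncard`. -/
def IsMonoComp {V : Type*} {k : ℕ} (G : SimpleGraph V) (c : Sym2 V → Fin k) (i : Fin k)
    (K : (colourSub G c i).ConnectedComponent) : Prop :=
  ∃ u v, (colourSub G c i).Adj u v ∧ (colourSub G c i).connectedComponentMk u = K

/-- The minimum degree of a finite simple graph (classical version). -/
noncomputable def minDeg {V : Type*} [Fintype V] (G : SimpleGraph V) : ℕ :=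
  @SimpleGraph.minDegree V G _ (Classical.decRel _)

lemma minDeg_le_ncard {V : Type*} [Fintype V] (G : SimpleGraph V) (v : V) :
    minDeg G ≤ (G.neighborSet v).ncard := by
  letI : DecidableRel G.Adj := Classical.decRel _
  have h := G.minDegree_le_degree v
  have h2 : (G.neighborSet v).ncard = G.degree v := by
    rw [← SimpleGraph.card_neighborSet_eq_degree, Set.ncard_eq_toFinset_card', Set.toFinset_card]
  rw [← h2] at h
  exact h

/-- If 6·δ(G) ≥ 5n and a 3-edge-colouring of G has exactly 2 components of some colour, then
there is a monochromatic component of order m with 2m ≥ n. -/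
theorem stmt_13 (n : ℕ) (G : SimpleGraph (Fin n)) (hδ : 5 * n ≤ 6 * minDeg G)
    (c : Sym2 (Fin n) → Fin 3) (i : Fin 3)
    (h2 : {K : (colourSub G c i).ConnectedComponent | IsMonoComp G c i K}.ncard = 2) :
    ∃ (j : Fin 3) (K : (colourSub G c j).ConnectedComponent),
      IsMonoComp G c j K ∧ n ≤ 2 * K.supp.ncard := by
  by_contra hcon
  push_neg at hcon
  -- the two colour-i components
  obtain ⟨KA, KB, hKne, hKset⟩ := Set.ncard_eq_two.mp h2
  have hMA : IsMonoComp G c i KA := by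
    have : KA ∈ {K | IsMonoComp G c i K} := by rw [hKset]; exact Set.mem_insert _ _
    exact this
  have hMB : IsMonoComp G c i KB := by
    have : KB ∈ {K | IsMonoComp G c i K} := by
      rw [hKset]; exact Set.mem_insert_of_mem _ rfl
    exact this
  have hmem : ∀ x y, (colourSub G c i).Adj x y →
      (colourSub G c i).connectedComponentMk x = KA ∨
      (colourSub G c i).connectedComponentMk x = KB := by
    intro x y h
    have : (colourSub G c i).connectedComponentMk x ∈ {K | IsMonoComp G c i K} :=
      ⟨x, y, h, rfl⟩
    rw [hKset] at this
    exact this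
  have hlt : ∀ (j : Fin 3) (x y : Fin n), (colourSub G c j).Adj x y →
      2 * ((colourSub G c j).connectedComponentMk x).supp.ncard < n := by
    intro j x y h
    exact hcon j _ ⟨x, y, h, rfl⟩
  set d := minDeg G with hd
  have huniv : (Set.univ : Set (Fin n)).ncard = n := by
    rw [Set.ncard_univ, Nat.card_eq_fintype_card, Fintype.card_fin]
  have hdegle : ∀ v : Fin n, d + 1 ≤ (insert v (G.neighborSet v)).ncard := by
    intro v
    rw [Set.ncard_insert_of_notMem ((SimpleGraph.notMem_neighborSet_self (G:=G) (a:=v)))]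
    have := minDeg_le_ncard G v
    omega
  -- n ≥ 6
  have hn6 : 6 ≤ n := by
    obtain ⟨u, v, huv, -⟩ := hMA
    have h1 := hdegle u
    have h5 := Set.ncard_le_ncard (Set.subset_univ (insert u (G.neighborSet u)))
    omega
  -- small-set helper
  have hsmall : ∀ (x : Fin n) (W : Set (Fin n)), x ∉ W → (∀ y ∈ W, ¬ G.Adj x y) →
      W.ncard + d + 1 ≤ n := by
    intro x W hxW hWadj
    have hsub : W ⊆ Set.univ \ insert x (G.neighborSet x) := by
      intro y hy
      refine ⟨trivial, ?_⟩
      rintro (rfl | h)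
      · exact hxW hy
      · exact hWadj y hy h
    have h1 : W.ncard ≤ (Set.univ \ insert x (G.neighborSet x)).ncard :=
      Set.ncard_le_ncard hsub
    rw [Set.ncard_diff (Set.subset_univ _)] at h1
    have h3 := hdegle x
    have h4 := Set.ncard_le_ncard (Set.subset_univ (insert x (G.neighborSet x)))
    omega
  have hAlt : 2 * KA.supp.ncard < n := by
    obtain ⟨u, v, huv, hu⟩ := hMA
    have := hlt i u v huv
    rwa [hu] at this
  have hBlt : 2 * KB.supp.ncard < n := by
    obtain ⟨u, v, huv, hu⟩ := hMB
    have := hlt i u v huv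
    rwa [hu] at this
  -- get w outside both colour-i components
  have hABdisj : Disjoint KA.supp KB.supp := by
    rw [Set.disjoint_left]
    intro a ha hb
    rw [SimpleGraph.ConnectedComponent.mem_supp_iff] at ha hb
    exact hKne (ha ▸ hb)
  obtain ⟨w, hwAB⟩ : ∃ w : Fin n, w ∉ KA.supp ∪ KB.supp := by
    by_contra h
    push_neg at h
    have h1 : (Set.univ : Set (Fin n)) ⊆ KA.supp ∪ KB.supp := fun x _ => h x
    have h2 := Set.ncard_le_ncard h1
    have h3 := Set.ncard_union_le KA.supp KB.supp
    omega
  have hwno : ∀ z, ¬ (colourSub G c i).Adj w z := by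
    intro z hz
    rcases hmem w z hz with h | h
    · exact hwAB (Or.inl ((KA.mem_supp_iff w).2 h))
    · exact hwAB (Or.inr ((KB.mem_supp_iff w).2 h))
  -- colours
  have htri : ∀ e : Sym2 (Fin n), c e = i ∨ c e = i + 1 ∨ c e = i + 2 := by
    have : ∀ a b : Fin 3, b = a ∨ b = a + 1 ∨ b = a + 2 := by decide
    exact fun e => this i (c e)
  -- every vertex has some colour component with small support (at w)
  have hwcomp : ∀ j : Fin 3,
      2 * ((colourSub G c j).connectedComponentMk w).supp.ncard < n := by
    intro j
    by_cases he : ∃ z, (colourSub G c j).Adj w z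
    · obtain ⟨z, hz⟩ := he
      exact hlt j w z hz
    · push_neg at he
      have hsub : ((colourSub G c j).connectedComponentMk w).supp ⊆ {w} := by
        intro z hz
        rw [SimpleGraph.ConnectedComponent.mem_supp_iff] at hz
        have hr : (colourSub G c j).Reachable w z :=
          (SimpleGraph.ConnectedComponent.exact hz).symm
        obtain ⟨p⟩ := hr
        cases p with
        | nil => exact Set.mem_singleton _
        | cons h _ => exact absurd h (he _)
      have := Set.ncard_le_ncard hsub (Set.finite_singleton w)
      rw [Set.ncard_singleton] at this
      omega
    -- the two other-colour components of w
  set C := ((colourSub G c (i+1)).connectedComponentMk w).supp with hCdef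
  set D := ((colourSub G c (i+2)).connectedComponentMk w).supp with hDdef
  have hClt : 2 * C.ncard < n := hwcomp (i+1)
  have hDlt : 2 * D.ncard < n := hwcomp (i+2)
  have hNsub : insert w (G.neighborSet w) ⊆ C ∪ D := by
    intro z hz
    rcases Set.mem_insert_iff.1 hz with rfl | hz
    · exact Or.inl (by rw [hCdef, SimpleGraph.ConnectedComponent.mem_supp_iff])
    · have hadj : G.Adj w z := hz
      rcases htri s(w, z) with hc | hc | hc
      · exact absurd ⟨hadj, hc⟩ (hwno z)
      · refine Or.inl ?_
        rw [hCdef, SimpleGraph.ConnectedComponent.mem_supp_iff]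
        exact SimpleGraph.ConnectedComponent.sound
          (SimpleGraph.Adj.reachable (SimpleGraph.Adj.symm (⟨hadj, hc⟩ :
            (colourSub G c (i+1)).Adj w z)))
      · refine Or.inr ?_
        rw [hDdef, SimpleGraph.ConnectedComponent.mem_supp_iff]
        exact SimpleGraph.ConnectedComponent.sound
          (SimpleGraph.Adj.reachable (SimpleGraph.Adj.symm (⟨hadj, hc⟩ :
            (colourSub G c (i+2)).Adj w z)))
  have hCDcard : d + 1 ≤ (C ∪ D).ncard := (hdegle w).trans (Set.ncard_le_ncard hNsub)
  set S := C \ D with hSdef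
  set T := D \ C with hTdef
  have hScard : 4 * n + 18 ≤ 12 * S.ncard := by
    have hsub : C ∪ D ⊆ S ∪ D := by
      intro x hx
      by_cases hxD : x ∈ D
      · exact Or.inr hxD
      · rcases hx with hx | hx
        · exact Or.inl ⟨hx, hxD⟩
        · exact absurd hx hxD
    have h1 := Set.ncard_le_ncard hsub
    have h2 := Set.ncard_union_le S D
    omega
  have hTcard : 4 * n + 18 ≤ 12 * T.ncard := by
    have hsub : C ∪ D ⊆ T ∪ C := by
      intro x hx
      by_cases hxC : x ∈ C
      · exact Or.inr hxC
      · rcases hx with hx | hx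
        · exact absurd hx hxC
        · exact Or.inl ⟨hx, hxC⟩
    have h1 := Set.ncard_le_ncard hsub
    have h2 := Set.ncard_union_le T C
    omega
  have hSTdisj : ∀ x, x ∈ S → x ∉ T := fun x hx ht => ht.2 hx.1
  -- all S-T edges have colour i
  have hST : ∀ x ∈ S, ∀ y ∈ T, G.Adj x y → (colourSub G c i).Adj x y := by
    intro x hx y hy hadj
    rcases htri s(x, y) with hc | hc | hc
    · exact ⟨hadj, hc⟩
    · exfalso
      have hxC : (colourSub G c (i+1)).connectedComponentMk x =
          (colourSub G c (i+1)).connectedComponentMk w := by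
        have := hx.1
        rw [hCdef, SimpleGraph.ConnectedComponent.mem_supp_iff] at this
        exact this
      have hyC : y ∈ C := by
        rw [hCdef, SimpleGraph.ConnectedComponent.mem_supp_iff, ← hxC]
        exact SimpleGraph.ConnectedComponent.sound
          (SimpleGraph.Adj.reachable (SimpleGraph.Adj.symm (⟨hadj, hc⟩ :
            (colourSub G c (i+1)).Adj x y)))
      exact hy.2 hyC
    · exfalso
      have hyD : (colourSub G c (i+2)).connectedComponentMk y =
          (colourSub G c (i+2)).connectedComponentMk w := by
        have := hy.1
        rw [hDdef, SimpleGraph.ConnectedComponent.mem_supp_iff] at this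
        exact this
      have hxD : x ∈ D := by
        rw [hDdef, SimpleGraph.ConnectedComponent.mem_supp_iff, ← hyD]
        exact SimpleGraph.ConnectedComponent.sound
          (SimpleGraph.Adj.reachable (⟨hadj, hc⟩ : (colourSub G c (i+2)).Adj x y))
      exact hx.2 hxD
  -- every vertex of S has a colour-i neighbour in T and vice versa
  have hnbT : ∀ x ∈ S, ∃ y ∈ T, (colourSub G c i).Adj x y := by
    intro x hx
    by_contra hno
    push_neg at hno
    have hnoadj : ∀ y ∈ T, ¬ G.Adj x y := fun y hy h => hno y hy (hST x hx y hy h)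
    have := hsmall x T (hSTdisj x hx) hnoadj
    omega
  have hnbS : ∀ y ∈ T, ∃ x ∈ S, (colourSub G c i).Adj y x := by
    intro y hy
    by_contra hno
    push_neg at hno
    have hnoadj : ∀ x ∈ S, ¬ G.Adj y x := fun x hx h =>
      hno x hx (SimpleGraph.Adj.symm (hST x hx y hy (SimpleGraph.Adj.symm h)))
    have hynS : y ∉ S := fun hS => hy.2 hS.1
    have := hsmall y S hynS hnoadj
    omega
  have toT : ∀ x ∈ S ∪ T, ∃ y ∈ T, (colourSub G c i).connectedComponentMk y =
      (colourSub G c i).connectedComponentMk x := by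
    intro x hx
    rcases hx with hx | hx
    · obtain ⟨y, hy, hadj⟩ := hnbT x hx
      exact ⟨y, hy, SimpleGraph.ConnectedComponent.sound
        (SimpleGraph.Adj.reachable (SimpleGraph.Adj.symm hadj))⟩
    · exact ⟨x, hx, rfl⟩
  have hABall : ∀ x ∈ S ∪ T, (colourSub G c i).connectedComponentMk x = KA ∨
      (colourSub G c i).connectedComponentMk x = KB := by
    intro x hx
    rcases hx with hx | hx
    · obtain ⟨y, hy, hadj⟩ := hnbT x hx
      exact hmem x y hadj
    · obtain ⟨z, hz, hadj⟩ := hnbS x hx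
      exact hmem x z hadj
  by_cases hallA : ∀ x ∈ S ∪ T, (colourSub G c i).connectedComponentMk x = KA
  · have hsub : S ∪ T ⊆ KA.supp := fun x hx => (KA.mem_supp_iff x).2 (hallA x hx)
    have h1 := Set.ncard_le_ncard hsub
    have h2 : (S ∪ T).ncard = S.ncard + T.ncard :=
      Set.ncard_union_eq (Set.disjoint_left.2 hSTdisj)
    omega
  · by_cases hallB : ∀ x ∈ S ∪ T, (colourSub G c i).connectedComponentMk x = KB
    · have hsub : S ∪ T ⊆ KB.supp := fun x hx => (KB.mem_supp_iff x).2 (hallB x hx)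
      have h1 := Set.ncard_le_ncard hsub
      have h2 : (S ∪ T).ncard = S.ncard + T.ncard :=
        Set.ncard_union_eq (Set.disjoint_left.2 hSTdisj)
      omega
    · push_neg at hallA hallB
      obtain ⟨xB, hxB, hxBne⟩ := hallA
      obtain ⟨xA, hxA, hxAne⟩ := hallB
      have hxBB : (colourSub G c i).connectedComponentMk xB = KB :=
        (hABall xB hxB).resolve_left hxBne
      have hxAA : (colourSub G c i).connectedComponentMk xA = KA :=
        (hABall xA hxA).resolve_right hxAne
      obtain ⟨tB, htB, htBc⟩ := toT xB hxB
      obtain ⟨tA, htA, htAc⟩ := toT xA hxA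
      rw [hxBB] at htBc
      rw [hxAA] at htAc
      have hbound : ∀ t ∈ T,
          (S ∩ {x | (colourSub G c i).connectedComponentMk x ≠
            (colourSub G c i).connectedComponentMk t}).ncard + d + 1 ≤ n := by
        intro t ht
        apply hsmall t
        · intro hmem'
          exact (hSTdisj _ hmem'.1) ht
        · intro y hy hadj
          have hadj' := hST y hy.1 t ht (SimpleGraph.Adj.symm hadj)
          exact hy.2 (SimpleGraph.ConnectedComponent.sound
            (SimpleGraph.Adj.reachable hadj'))
      have hsub : S ⊆ (S ∩ {x | (colourSub G c i).connectedComponentMk x ≠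
            (colourSub G c i).connectedComponentMk tA}) ∪
          (S ∩ {x | (colourSub G c i).connectedComponentMk x ≠
            (colourSub G c i).connectedComponentMk tB}) := by
        intro x hx
        rcases hABall x (Or.inl hx) with h | h
        · refine Or.inr ⟨hx, ?_⟩
          show (colourSub G c i).connectedComponentMk x ≠
            (colourSub G c i).connectedComponentMk tB
          rw [h, htBc]; exact hKne
        · refine Or.inl ⟨hx, ?_⟩
          show (colourSub G c i).connectedComponentMk x ≠
            (colourSub G c i).connectedComponentMk tA
          rw [h, htAc]; exact fun hh => hKne hh.symm
      have h1 := Set.ncard_le_ncard hsub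
      have h2 := Set.ncard_union_le
        (S ∩ {x | (colourSub G c i).connectedComponentMk x ≠
          (colourSub G c i).connectedComponentMk tA})
        (S ∩ {x | (colourSub G c i).connectedComponentMk x ≠
          (colourSub G c i).connectedComponentMk tB})
      have hbA := hbound tA htA
      have hbB := hbound tB htB
      omega
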